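/- arXiv:1711.02411 — 2 statements merged into one kernel-verified Lean document; each statement's English description precedes it below -/
import Mathlib

section
/- Let F = Inj_1(n,k) be the set of injective functions from [n] to [k], with whirl maps w_i (repeatedly adding 1 mod k at position i until injective) and w = w_n ∘ ⋯ ∘ w_1. Then for every w-orbit O and every j ∈ [k], the average over f in O of #{i ∈ [n] : f(i) = j} equals n/k. -/
open Finset

open scoped Classical

open Fin.NatCast

noncomputable def whirl {n k : ℕ} [NeZero k] (F : Set (Fin n → Fin k)) (i : Fin n)
    (f : Fin n → Fin k) : Fin n → Fin k :=
  if h : ∃ t : ℕ, 0 < t ∧ Function.update f i (f i + (t : Fin k)) ∈ F then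
    Function.update f i (f i + ((Nat.find h : ℕ) : Fin k))
  else f

noncomputable def whirlAll {n k : ℕ} [NeZero k] (F : Set (Fin n → Fin k))
    (f : Fin n → Fin k) : Fin n → Fin k :=
  (List.finRange n).foldl (fun g i => whirl F i g) f

noncomputable def orbitOf {α : Type*} [Fintype α] [DecidableEq α] (w : α → α) (f : α) :
    Finset α :=
  Finset.univ.filter fun g => ∃ m : ℕ, w^[m] f = g

open Function

/-!
Number the moves along a `w`-orbit of length `L` by pairs `(m, i)`: in round `m`, position `i`
whirls from `g_m i` to `g_{m+1} i`. The number `S v` of moves with `g_m i = v` is `L` times the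
orbit average of `η_v`. Reading `S (v + 1)` at the ends of moves and `S v` at their starts, the
difference is the number of moves jumping over `v` into `v + 1` minus the number of moves leaving
`v` over `v + 1`. These are equinumerous: a position jumping over `v` finds `v` held by some `u`,
and the next move of `u` leaves `v` while `v + 1` is still taken; conversely. So `S` is constant
and `k * S j = L * n`.

For `n < k` this needs `w` to permute the injections: a whirl stops at the first free value, so
two injections differing only at `i` are never whirled to the same one. For `n = k` every
injection is a bijection and `η_j = 1`.
-/

abbrev injections (n k : ℕ) : Set (Fin n → Fin k) := {h | Injective h}

/-- `(b - a).val` is the distance from `a` up to `b` around `Fin k`: if `b` lies on the arc from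
`a₁` up to `a₂`, then `a₁` lies on the arc from `a₂` up to `b`. -/
theorem Fin.val_sub_le_val_sub_of_lt {k : ℕ} {a₁ a₂ b : Fin k}
    (h : (b - a₁).val < (a₂ - a₁).val) : (a₁ - a₂).val ≤ (b - a₂).val := by
  have val_sub : ∀ x y : Fin k,
      (x - y).val = if y ≤ x then x.val - y.val else k + x.val - y.val := fun x y => by
    split_ifs with hxy
    · exact Fin.coe_sub_iff_le.2 hxy
    · exact Fin.coe_sub_iff_lt.2 (not_le.1 hxy)
  simp only [val_sub, Fin.le_def] at h ⊢
  have := a₁.isLt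
  split_ifs at h ⊢ <;> omega

section Orbit

variable {α : Type*} {w : α → α} {f : α} {L : ℕ} [NeZero L]

theorem injective_iterate_val (hL : minimalPeriod w f = L) :
    Injective fun m : ZMod L => w^[m.val] f := fun a b h =>
  ZMod.val_injective L <| iterate_injOn_Iio_minimalPeriod
    (by rw [Set.mem_Iio, hL]; exact ZMod.val_lt a) (by rw [Set.mem_Iio, hL]; exact ZMod.val_lt b) h

theorem iterate_val_add_one (hL : minimalPeriod w f = L) (m : ZMod L) :
    w^[(m + 1).val] f = w (w^[m.val] f) := by
  subst hL
  rw [ZMod.val_add, ZMod.val_one_eq_one_mod, Nat.add_mod_mod, iterate_mod_minimalPeriod_eq,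
    iterate_succ_apply']

theorem orbitOf_eq_image [Fintype α] [DecidableEq α] (hL : minimalPeriod w f = L) :
    orbitOf w f = univ.image fun m : ZMod L => w^[m.val] f := by
  ext g
  simp only [orbitOf, mem_filter, mem_univ, true_and, mem_image]
  constructor
  · rintro ⟨m, rfl⟩
    exact ⟨m, by rw [ZMod.val_natCast, ← hL, iterate_mod_minimalPeriod_eq]⟩
  · rintro ⟨m, rfl⟩
    exact ⟨m.val, rfl⟩

theorem self_mem_orbitOf [Fintype α] [DecidableEq α] (w : α → α) (f : α) :
    f ∈ orbitOf w f :=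
  mem_filter.2 ⟨mem_univ _, 0, rfl⟩

end Orbit

section Whirl

variable {n k : ℕ} {g : Fin n → Fin k}

theorem injective_update_iff (hg : Injective g) (i : Fin n) (v : Fin k) :
    Injective (update g i v) ↔ ∀ u ≠ i, g u ≠ v := by
  refine ⟨fun h u hu hgu => hu (h ?_), fun h x y hxy => ?_⟩
  · rw [update_of_ne hu, update_self, hgu]
  · rcases eq_or_ne x i with rfl | hx <;> rcases eq_or_ne y x with rfl | hy
    all_goals try rfl
    · rw [update_self, update_of_ne hy] at hxy
      exact absurd hxy.symm (h y hy)
    · rcases eq_or_ne y i with rfl | hyi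
      · rw [update_self, update_of_ne hx] at hxy
        exact absurd hxy (h x hx)
      · rw [update_of_ne hx, update_of_ne hyi] at hxy
        exact hg hxy

variable [NeZero k] {F : Set (Fin n → Fin k)}

theorem whirl_apply_of_ne (F : Set (Fin n → Fin k)) {i u : Fin n} (hu : u ≠ i)
    (g : Fin n → Fin k) : whirl F i g u = g u := by
  unfold whirl
  split_ifs
  · exact update_of_ne hu _ _
  · rfl

theorem whirl_mem (hg : g ∈ F) (i : Fin n) : whirl F i g ∈ F := by
  unfold whirl
  split_ifs with h
  · exact (Nat.find_spec h).2
  · exact hg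

theorem mapsTo_whirl (i : Fin n) : Set.MapsTo (whirl F i) F F := fun _ hg => whirl_mem hg i

theorem exists_whirl_eq (hnk : n < k) (hg : Injective g) (i : Fin n) :
    ∃ T : ℕ, 0 < T ∧ T < k ∧ whirl (injections n k) i g i = g i + T ∧
      ∀ s : ℕ, 0 < s → s < T → ∃ u ≠ i, g u = g i + s := by
  obtain ⟨c, hc⟩ : ∃ c, ∀ u, g u ≠ c := by
    by_contra! hsurj
    have := Fintype.card_le_of_surjective g hsurj
    simp only [Fintype.card_fin] at this
    omega
  have hct : 0 < (c - g i).val ∧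
      update g i (g i + ((c - g i).val : Fin k)) ∈ injections n k := by
    refine ⟨Nat.pos_of_ne_zero fun h0 => hc i (sub_eq_zero.1 (Fin.ext h0)).symm, ?_⟩
    rw [Fin.cast_val_eq_self, add_sub_cancel]
    exact (injective_update_iff hg i c).2 fun u _ => hc u
  have hex : ∃ t : ℕ, 0 < t ∧ update g i (g i + t) ∈ injections n k := ⟨_, hct⟩
  refine ⟨Nat.find hex, (Nat.find_spec hex).1, (Nat.find_min' hex hct).trans_lt (c - g i).isLt,
    by rw [whirl, dif_pos hex, update_self]; congr, fun s hs hsT => ?_⟩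
  have := Nat.find_min hex hsT
  simp only [hs, true_and, Set.mem_ofPred_eq, injective_update_iff hg] at this
  push Not at this
  exact this

theorem whirl_apply_self_ne (hnk : n < k) (hg : Injective g) (i : Fin n) :
    whirl (injections n k) i g i ≠ g i := by
  obtain ⟨T, hT0, hTk, hb, -⟩ := exists_whirl_eq hnk hg i
  rw [hb, Ne, add_eq_left, ← Fin.val_eq_val, Fin.val_cast_of_lt hTk]
  exact hT0.ne'

theorem exists_apply_eq_add_of_lt (hnk : n < k) (hg : Injective g) (i : Fin n) {s : ℕ}
    (hs0 : 0 < s) (hs : s < (whirl (injections n k) i g i - g i).val) :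
    ∃ u ≠ i, g u = g i + s := by
  obtain ⟨T, -, hTk, hb, hskip⟩ := exists_whirl_eq hnk hg i
  rw [hb, add_sub_cancel_left, Fin.val_cast_of_lt hTk] at hs
  exact hskip s hs0 hs

/-- A whirl stops at the first free value. -/
theorem whirl_apply_sub_lt (hnk : n < k) (hg : Injective g) (i : Fin n) {c : Fin k}
    (hc : c ≠ g i) (hfree : ∀ u ≠ i, g u ≠ c) (hb : whirl (injections n k) i g i ≠ c) :
    (whirl (injections n k) i g i - g i).val < (c - g i).val := by
  by_contra! hle
  rcases hle.lt_or_eq with hlt | heq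
  · have hpos : 0 < (c - g i).val := Nat.pos_of_ne_zero fun h0 => hc (sub_eq_zero.1 (Fin.ext h0))
    obtain ⟨u, hu, hgu⟩ := exists_apply_eq_add_of_lt hnk hg i hpos hlt
    rw [Fin.cast_val_eq_self, add_sub_cancel] at hgu
    exact hfree u hu hgu
  · exact hb (sub_left_inj.1 (Fin.ext heq.symm))

theorem injOn_whirl (hnk : n < k) (i : Fin n) :
    Set.InjOn (whirl (injections n k) i) (injections n k) := by
  intro g₁ hg₁ g₂ hg₂ heq
  have hoff : ∀ u ≠ i, g₁ u = g₂ u := fun u hu => by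
    rw [← whirl_apply_of_ne _ hu g₁, heq, whirl_apply_of_ne _ hu g₂]
  suffices h : g₁ i = g₂ i from funext fun u => (eq_or_ne u i).elim (· ▸ h) (hoff u)
  by_contra hne
  have hb : whirl _ i g₁ i = whirl _ i g₂ i := congrFun heq i
  have free₁ : ∀ u ≠ i, g₁ u ≠ g₂ i := fun u hu h =>
    hu (hg₂ ((hoff u hu).symm.trans h))
  have free₂ : ∀ u ≠ i, g₂ u ≠ g₁ i := fun u hu h => hu (hg₁ ((hoff u hu).trans h))
  have h₁ := whirl_apply_sub_lt hnk hg₁ i (Ne.symm hne) free₁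
    (hb ▸ whirl_apply_self_ne hnk hg₂ i)
  have h₂ := whirl_apply_sub_lt hnk hg₂ i hne free₂ (hb ▸ whirl_apply_self_ne hnk hg₁ i)
  rw [hb] at h₁
  exact (Fin.val_sub_le_val_sub_of_lt h₁).not_gt h₂

end Whirl

section Round

variable {n k : ℕ} [NeZero k] (F : Set (Fin n → Fin k)) {g : Fin n → Fin k}

noncomputable def whirlUpTo (t : ℕ) (g : Fin n → Fin k) : Fin n → Fin k :=
  ((List.finRange n).take t).foldl (fun g i => whirl F i g) g

theorem foldl_whirl_mem (l : List (Fin n)) (hg : g ∈ F) :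
    l.foldl (fun g i => whirl F i g) g ∈ F := by
  induction l generalizing g with
  | nil => exact hg
  | cons i l ih => exact ih (whirl_mem hg i)

theorem mapsTo_whirlAll : Set.MapsTo (whirlAll F) F F := fun _ hg => foldl_whirl_mem F _ hg

theorem whirlUpTo_mem (hg : g ∈ F) (t : ℕ) : whirlUpTo F t g ∈ F := foldl_whirl_mem F _ hg

theorem whirlUpTo_of_le {t : ℕ} (ht : n ≤ t) (g : Fin n → Fin k) :
    whirlUpTo F t g = whirlAll F g := by
  rw [whirlUpTo, whirlAll, List.take_of_length_le (by simpa using ht)]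

theorem whirlUpTo_succ {t : ℕ} (ht : t < n) (g : Fin n → Fin k) :
    whirlUpTo F (t + 1) g = whirl F ⟨t, ht⟩ (whirlUpTo F t g) := by
  have hget : (List.finRange n)[t]? = some ⟨t, ht⟩ := by simp [ht]
  rw [whirlUpTo, whirlUpTo, List.take_add_one, hget, Option.toList_some, List.foldl_append]
  rfl

theorem whirlUpTo_apply (t : ℕ) (g : Fin n → Fin k) (u : Fin n) :
    whirlUpTo F t g u = if u.val < t then whirlAll F g u else g u := by
  have stable : ∀ t d, u.val < t → whirlUpTo F t g u = whirlUpTo F (t + d) g u := by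
    intro t d hu
    induction d with
    | zero => rfl
    | succ d ih =>
      by_cases h : t + d < n
      · rw [← add_assoc, whirlUpTo_succ F h,
          whirl_apply_of_ne _ (Fin.ne_of_val_ne (by simp; omega)), ih]
      · rwa [whirlUpTo_of_le F (t := t + (d + 1)) (by omega) g,
          ← whirlUpTo_of_le F (t := t + d) (by omega) g]
  have fresh : ∀ t, t ≤ u.val → whirlUpTo F t g u = g u := by
    intro t ht
    induction t with
    | zero => rfl
    | succ t ih =>
      rw [whirlUpTo_succ F (by omega), whirl_apply_of_ne _ (Fin.ne_of_val_ne (by simp; omega)),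
        ih (by omega)]
  split_ifs with h
  · rw [stable t n h, whirlUpTo_of_le F (by omega)]
  · exact fresh t (by omega)

theorem whirlUpTo_apply_self (i : Fin n) (g : Fin n → Fin k) : whirlUpTo F i g i = g i := by
  rw [whirlUpTo_apply, if_neg (lt_irrefl _)]

theorem whirlAll_apply (g : Fin n → Fin k) (i : Fin n) :
    whirlAll F g i = whirl F i (whirlUpTo F i g) i := by
  have h := whirlUpTo_apply F (i + 1) g i
  rw [if_pos i.val.lt_succ_self, whirlUpTo_succ F i.isLt] at h
  exact h.symm

end Round

section Injections

variable {n k : ℕ} [NeZero k] {g : Fin n → Fin k}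

theorem injective_whirlUpTo (hg : Injective g) (t : ℕ) :
    Injective (whirlUpTo (injections n k) t g) :=
  whirlUpTo_mem (injections n k) hg t

theorem whirlAll_apply_ne_whirlUpTo (hg : Injective g) {i u : Fin n} (hu : u ≠ i) :
    whirlAll (injections n k) g i ≠ whirlUpTo (injections n k) i g u := by
  rw [whirlAll_apply, ← whirl_apply_of_ne _ hu (whirlUpTo (injections n k) i g)]
  exact (whirl_mem (F := injections n k) (injective_whirlUpTo hg i) i).ne hu.symm

theorem whirlAll_apply_ne_self (hnk : n < k) (hg : Injective g) (i : Fin n) :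
    whirlAll (injections n k) g i ≠ g i := by
  have h := whirl_apply_self_ne hnk (injective_whirlUpTo hg i) i
  rwa [whirlUpTo_apply_self, ← whirlAll_apply] at h

theorem exists_whirlUpTo_eq_add_of_lt (hnk : n < k) (hg : Injective g) (i : Fin n) {s : ℕ}
    (hs0 : 0 < s) (hs : s < (whirlAll (injections n k) g i - g i).val) :
    ∃ u ≠ i, whirlUpTo (injections n k) i g u = g i + s := by
  have h := exists_apply_eq_add_of_lt hnk (injective_whirlUpTo hg i) i hs0
  rw [whirlUpTo_apply_self, ← whirlAll_apply] at h
  exact h hs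

theorem one_lt_val_sub_whirlAll (hnk : n < k) (hg : Injective g) (i : Fin n)
    (h : whirlAll (injections n k) g i ≠ g i + 1) :
    1 < (whirlAll (injections n k) g i - g i).val := by
  have hcast := Fin.cast_val_eq_self (whirlAll (injections n k) g i - g i)
  have h0 : (whirlAll (injections n k) g i - g i).val ≠ 0 := fun h0 =>
    whirlAll_apply_ne_self hnk hg i (sub_eq_zero.1 (Fin.ext h0))
  have h1 : (whirlAll (injections n k) g i - g i).val ≠ 1 := fun h1 => h (by
    rw [h1, Nat.cast_one] at hcast
    exact sub_eq_iff_eq_add'.1 hcast.symm)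
  omega

theorem exists_whirlUpTo_eq_of_whirlAll_eq_add_one (hnk : n < k) (hg : Injective g) (i : Fin n)
    {v : Fin k} (hb : whirlAll (injections n k) g i = v + 1) (ha : g i ≠ v) :
    ∃ u ≠ i, whirlUpTo (injections n k) i g u = v := by
  set T := (whirlAll (injections n k) g i - g i).val with hT
  have hT1 : 1 < T := one_lt_val_sub_whirlAll hnk hg i (by rwa [hb, Ne, add_left_inj, eq_comm])
  obtain ⟨u, hu, hgu⟩ :=
    exists_whirlUpTo_eq_add_of_lt hnk hg i (s := T - 1) (by omega) (by omega)
  have hcast : ((T - 1 : ℕ) : Fin k) = (T : Fin k) - 1 := by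
    rw [eq_sub_iff_add_eq, ← Nat.cast_add_one, Nat.sub_add_cancel (by omega)]
  refine ⟨u, hu, ?_⟩
  rw [hgu, hcast, hT, Fin.cast_val_eq_self, hb]
  abel

theorem exists_whirlUpTo_eq_add_one (hnk : n < k) (hg : Injective g) (i : Fin n) {v : Fin k}
    (ha : g i = v) (hb : whirlAll (injections n k) g i ≠ v + 1) :
    ∃ u ≠ i, whirlUpTo (injections n k) i g u = v + 1 := by
  obtain ⟨u, hu, hgu⟩ := exists_whirlUpTo_eq_add_of_lt hnk hg i one_pos
    (one_lt_val_sub_whirlAll hnk hg i (ha ▸ hb))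
  exact ⟨u, hu, by rw [hgu, Nat.cast_one, ha]⟩

theorem injOn_whirlAll (hnk : n < k) : Set.InjOn (whirlAll (injections n k)) (injections n k) := by
  suffices ∀ l : List (Fin n),
      Set.InjOn (fun g => l.foldl (fun g i => whirl (injections n k) i g) g) (injections n k) from
    this _
  intro l
  induction l with
  | nil => exact Set.injOn_id _
  | cons i l ih => exact ih.comp (injOn_whirl hnk i) (mapsTo_whirl i)

theorem mem_periodicPts_whirlAll (hnk : n < k) (hg : Injective g) :
    g ∈ periodicPts (whirlAll (injections n k)) := by
  have hinj := (mapsTo_whirlAll (injections n k)).restrict_inj.2 (injOn_whirlAll hnk)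
  exact Semiconj.mapsTo_periodicPts (fb := whirlAll (injections n k)) (g := Subtype.val)
    (fun _ => rfl) (hinj.mem_periodicPts ⟨g, hg⟩)

end Injections

section Moves

variable {n k L : ℕ} (G : ZMod L → Fin n → Fin k)

/-- The configuration on which the move `e = (m, i)`, position `i` whirling in round `m`, acts. -/
def stateAt (e : ZMod L × Fin n) : Fin n → Fin k :=
  fun u => if u < e.2 then G (e.1 + 1) u else G e.1 u

def nextMove (e : ZMod L × Fin n) (u : Fin n) : ZMod L × Fin n :=
  (if u < e.2 then e.1 + 1 else e.1, u)

def prevMove (e : ZMod L × Fin n) (i : Fin n) : ZMod L × Fin n :=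
  (if i < e.2 then e.1 else e.1 - 1, i)

theorem stateAt_self (e : ZMod L × Fin n) : stateAt G e e.2 = G e.1 e.2 :=
  if_neg (lt_irrefl _)

theorem stateAt_eq_nextMove {e : ZMod L × Fin n} {u : Fin n} :
    stateAt G e u = G (nextMove e u).1 u := by
  unfold stateAt nextMove
  split_ifs <;> rfl

theorem stateAt_nextMove {e : ZMod L × Fin n} {u : Fin n} (hu : u ≠ e.2) :
    stateAt G (nextMove e u) e.2 = G (e.1 + 1) e.2 := by
  unfold stateAt nextMove
  rcases hu.lt_or_gt with h | h
  · simp [h, not_lt_of_gt h]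
  · simp [h, not_lt_of_gt h]

theorem nextMove_prevMove {e : ZMod L × Fin n} {i : Fin n} (hi : i ≠ e.2) :
    nextMove (prevMove e i) e.2 = e := by
  unfold nextMove prevMove
  rcases hi.lt_or_gt with h | h
  · simp [h, not_lt_of_gt h]
  · simp [h, not_lt_of_gt h]

theorem prevMove_nextMove {e : ZMod L × Fin n} {u : Fin n} (hu : u ≠ e.2) :
    prevMove (nextMove e u) e.2 = e := by
  unfold nextMove prevMove
  rcases hu.lt_or_gt with h | h
  · simp [h, not_lt_of_gt h]
  · simp [h, not_lt_of_gt h]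

end Moves

section Cycle

variable {n k L : ℕ} [NeZero k] {G : ZMod L → Fin n → Fin k}

theorem stateAt_eq_whirlUpTo (hG : ∀ m, G (m + 1) = whirlAll (injections n k) (G m))
    (e : ZMod L × Fin n) : stateAt G e = whirlUpTo (injections n k) e.2 (G e.1) := by
  funext u
  rw [whirlUpTo_apply, ← hG]
  rfl

theorem injective_stateAt (hG : ∀ m, G (m + 1) = whirlAll (injections n k) (G m))
    (hinj : ∀ m, Injective (G m)) (e : ZMod L × Fin n) : Injective (stateAt G e) := by
  rw [stateAt_eq_whirlUpTo hG]
  exact injective_whirlUpTo (hinj _) _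

theorem apply_add_one_ne_stateAt (hG : ∀ m, G (m + 1) = whirlAll (injections n k) (G m))
    (hinj : ∀ m, Injective (G m)) {e : ZMod L × Fin n} {u : Fin n} (hu : u ≠ e.2) :
    G (e.1 + 1) e.2 ≠ stateAt G e u := by
  rw [hG, stateAt_eq_whirlUpTo hG]
  exact whirlAll_apply_ne_whirlUpTo (hinj _) hu

theorem exists_stateAt_eq_of_jump_over (hnk : n < k)
    (hG : ∀ m, G (m + 1) = whirlAll (injections n k) (G m)) (hinj : ∀ m, Injective (G m))
    {e : ZMod L × Fin n} {v : Fin k} (hb : G (e.1 + 1) e.2 = v + 1) (ha : G e.1 e.2 ≠ v) :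
    ∃ u ≠ e.2, stateAt G e u = v := by
  rw [stateAt_eq_whirlUpTo hG]
  rw [hG] at hb
  exact exists_whirlUpTo_eq_of_whirlAll_eq_add_one hnk (hinj _) _ hb ha

theorem exists_stateAt_eq_add_one_of_jump_out (hnk : n < k)
    (hG : ∀ m, G (m + 1) = whirlAll (injections n k) (G m)) (hinj : ∀ m, Injective (G m))
    {e : ZMod L × Fin n} {v : Fin k} (ha : G e.1 e.2 = v) (hb : G (e.1 + 1) e.2 ≠ v + 1) :
    ∃ i ≠ e.2, stateAt G e i = v + 1 := by
  rw [stateAt_eq_whirlUpTo hG]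
  rw [hG] at hb
  exact exists_whirlUpTo_eq_add_one hnk (hinj _) _ ha hb

theorem jump_out_nextMove (hG : ∀ m, G (m + 1) = whirlAll (injections n k) (G m))
    (hinj : ∀ m, Injective (G m)) {e : ZMod L × Fin n} {u : Fin n} {v : Fin k} (hu : u ≠ e.2)
    (hb : G (e.1 + 1) e.2 = v + 1) (hv : stateAt G e u = v) :
    G (nextMove e u).1 u = v ∧ G ((nextMove e u).1 + 1) u ≠ v + 1 := by
  refine ⟨(stateAt_eq_nextMove G).symm.trans hv, ?_⟩
  -- when `u` moves next, `e.2` still holds `v + 1`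
  rw [← hb, ← stateAt_nextMove G hu]
  exact apply_add_one_ne_stateAt hG hinj hu.symm

theorem jump_over_prevMove (hG : ∀ m, G (m + 1) = whirlAll (injections n k) (G m))
    (hinj : ∀ m, Injective (G m)) {e : ZMod L × Fin n} {i : Fin n} {v : Fin k} (hi : i ≠ e.2)
    (ha : G e.1 e.2 = v) (hv : stateAt G e i = v + 1) :
    G ((prevMove e i).1 + 1) i = v + 1 ∧ G (prevMove e i).1 i ≠ v := by
  have hnext := nextMove_prevMove hi
  refine ⟨?_, ?_⟩
  · have h := stateAt_nextMove G (e := prevMove e i) hi.symm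
    rw [hnext] at h
    exact h.symm.trans hv
  · have h := (injective_stateAt hG hinj (prevMove e i)).ne hi
    rw [stateAt_eq_nextMove G (u := e.2), hnext, ha] at h
    exact fun h' => h (h' ▸ stateAt_self G (prevMove e i))

/-- Matching every move over `v` into `v + 1` with the next move of the position holding `v`. -/
theorem card_jump_over_eq_card_jump_out [NeZero L] (hnk : n < k)
    (hG : ∀ m, G (m + 1) = whirlAll (injections n k) (G m)) (hinj : ∀ m, Injective (G m))
    (v : Fin k) :
    #{e : ZMod L × Fin n | G (e.1 + 1) e.2 = v + 1 ∧ G e.1 e.2 ≠ v} =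
      #{e : ZMod L × Fin n | G e.1 e.2 = v ∧ G (e.1 + 1) e.2 ≠ v + 1} := by
  rcases isEmpty_or_nonempty (Fin n) with hn | hn
  · simp [univ_eq_empty]
  have occupant : ∀ e u c, stateAt G e u = c → invFun (stateAt G e) c = u := fun e u c h =>
    h ▸ leftInverse_invFun (injective_stateAt hG hinj e) u
  refine card_nbij' (fun e => nextMove e (invFun (stateAt G e) v))
    (fun e => prevMove e (invFun (stateAt G e) (v + 1))) ?_ ?_ ?_ ?_ <;>
  intro e he <;> simp only [coe_filter, mem_univ, true_and, Set.mem_ofPred_eq] at he ⊢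
  · obtain ⟨u, hu, hv⟩ := exists_stateAt_eq_of_jump_over hnk hG hinj he.1 he.2
    rw [occupant e u v hv]
    exact jump_out_nextMove hG hinj hu he.1 hv
  · obtain ⟨i, hi, hv⟩ := exists_stateAt_eq_add_one_of_jump_out hnk hG hinj he.1 he.2
    rw [occupant e i _ hv]
    exact jump_over_prevMove hG hinj hi he.1 hv
  · obtain ⟨u, hu, hv⟩ := exists_stateAt_eq_of_jump_over hnk hG hinj he.1 he.2
    rw [occupant e u v hv, occupant _ e.2 (v + 1) (by rw [stateAt_nextMove G hu]; exact he.1),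
      prevMove_nextMove hu]
  · obtain ⟨i, hi, hv⟩ := exists_stateAt_eq_add_one_of_jump_out hnk hG hinj he.1 he.2
    rw [occupant e i _ hv,
      occupant _ e.2 v (by rw [stateAt_eq_nextMove, nextMove_prevMove hi]; exact he.1),
      nextMove_prevMove hi]

end Cycle

section Visits

variable {n k L : ℕ} [NeZero L] (G : ZMod L → Fin n → Fin k)

def visits (v : Fin k) : ℕ := #{e : ZMod L × Fin n | G e.1 e.2 = v}

theorem card_apply_add_one_eq_visits (v : Fin k) :
    #{e : ZMod L × Fin n | G (e.1 + 1) e.2 = v} = visits G v :=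
  card_equiv ((Equiv.addRight 1).prodCongr (Equiv.refl _)) (by simp)

theorem sum_visits : ∑ v, visits G v = L * n := by
  unfold visits
  rw [← card_eq_sum_card_fiberwise (f := fun e : ZMod L × Fin n => G e.1 e.2)
    fun _ _ => mem_coe.2 (mem_univ _)]
  simp

theorem visits_eq_sum (v : Fin k) : visits G v = ∑ m, #{i | G m i = v} := by
  unfold visits
  rw [card_filter, Fintype.sum_prod_type]
  simp only [card_filter]

variable {G} [NeZero k]

theorem visits_add_one (hnk : n < k) (hG : ∀ m, G (m + 1) = whirlAll (injections n k) (G m))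
    (hinj : ∀ m, Injective (G m)) (v : Fin k) : visits G (v + 1) = visits G v := by
  have h := card_jump_over_eq_card_jump_out hnk hG hinj v
  have h₁ := card_filter_add_card_filter_not
    (s := {e : ZMod L × Fin n | G (e.1 + 1) e.2 = v + 1}) (fun e => G e.1 e.2 = v)
  have h₂ := card_filter_add_card_filter_not
    (s := {e : ZMod L × Fin n | G e.1 e.2 = v}) (fun e => G (e.1 + 1) e.2 = v + 1)
  rw [card_apply_add_one_eq_visits] at h₁
  simp only [filter_filter, ne_eq, and_comm] at h h₁ h₂
  unfold visits at h₁ ⊢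
  omega

theorem k_mul_visits (hnk : n < k) (hG : ∀ m, G (m + 1) = whirlAll (injections n k) (G m))
    (hinj : ∀ m, Injective (G m)) (v : Fin k) : k * visits G v = L * n := by
  have hconst : ∀ c : ℕ, visits G c = visits G 0 := fun c => by
    induction c with
    | zero => rw [Nat.cast_zero]
    | succ c ih => rw [Nat.cast_add_one, visits_add_one hnk hG hinj, ih]
  rw [← sum_visits G, sum_congr rfl fun w _ => Fin.cast_val_eq_self w ▸ hconst w.val,
    ← Fin.cast_val_eq_self v, hconst]
  simp

end Visits

noncomputable def orbitAverage {n k : ℕ} (w : (Fin n → Fin k) → Fin n → Fin k)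
    (f : Fin n → Fin k) (j : Fin k) : ℚ :=
  (∑ g ∈ orbitOf w f, (#{i | g i = j} : ℚ)) / #(orbitOf w f)

theorem card_filter_apply_eq_of_bijective {n k : ℕ} {g : Fin n → Fin k} (hg : Bijective g)
    (j : Fin k) : #{i | g i = j} = 1 := by
  obtain ⟨u, rfl⟩ := hg.2 j
  simp [hg.1.eq_iff, filter_eq']

theorem orbitAverage_eq_one {n : ℕ} {w : (Fin n → Fin n) → Fin n → Fin n}
    {f : Fin n → Fin n} (h : ∀ g ∈ orbitOf w f, Bijective g) (j : Fin n) :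
    orbitAverage w f j = 1 := by
  unfold orbitAverage
  rw [sum_congr rfl fun g hg => by rw [card_filter_apply_eq_of_bijective (h g hg)], sum_const,
    nsmul_eq_mul, Nat.cast_one, mul_one, div_self]
  exact Nat.cast_ne_zero.2 (card_ne_zero_of_mem (self_mem_orbitOf w f))

theorem orbitAverage_whirlAll {n k : ℕ} [NeZero k] (hnk : n < k) {f : Fin n → Fin k}
    (hf : Injective f) (j : Fin k) : orbitAverage (whirlAll (injections n k)) f j = n / k := by
  set L := minimalPeriod (whirlAll (injections n k)) f with hL
  have : NeZero L :=
    ⟨(minimalPeriod_pos_of_mem_periodicPts (mem_periodicPts_whirlAll hnk hf)).ne'⟩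
  set G : ZMod L → Fin n → Fin k := fun m => (whirlAll (injections n k))^[m.val] f
  have hGinj : Injective G := injective_iterate_val hL.symm
  have hvisits := k_mul_visits hnk (iterate_val_add_one hL.symm)
    (fun m => (mapsTo_whirlAll (injections n k)).iterate m.val hf) j
  unfold orbitAverage
  rw [orbitOf_eq_image hL.symm, sum_image hGinj.injOn, card_image_of_injective _ hGinj, card_univ,
    ZMod.card, ← Nat.cast_sum, ← visits_eq_sum,
    div_eq_div_iff (Nat.cast_ne_zero.2 (NeZero.ne L)) (Nat.cast_ne_zero.2 (NeZero.ne k))]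
  exact_mod_cast by linarith

theorem stmt1 {n k : ℕ} [NeZero k] (hnk : n ≤ k)
    (f : Fin n → Fin k) (hf : Function.Injective f) (j : Fin k) :
    (∑ g ∈ orbitOf (whirlAll {h : Fin n → Fin k | Function.Injective h}) f,
        ((Finset.univ.filter fun i => g i = j).card : ℚ)) /
      ((orbitOf (whirlAll {h : Fin n → Fin k | Function.Injective h}) f).card : ℚ)
      = (n : ℚ) / k := by
  change orbitAverage (whirlAll (injections n k)) f j = n / k
  rcases hnk.lt_or_eq with hnk | rfl
  · exact orbitAverage_whirlAll hnk hf j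
  · rw [div_self (Nat.cast_ne_zero.2 (NeZero.ne n)), orbitAverage_eq_one]
    intro g hg
    obtain ⟨m, rfl⟩ := (mem_filter.1 hg).2
    exact Finite.injective_iff_bijective.1 ((mapsTo_whirlAll (injections n n)).iterate m hf)
end

section
/- Let f ∈ Park(n) be a parking function and i ∈ [n]. Then whirling at index i satisfies: (w_i(f))(i) = f(i)+1 if #f⁻¹([f(i)]) > f(i), and (w_i(f))(i) = 1 if #f⁻¹([f(i)]) = f(i). -/
/-!
Lowering a value of a parking function keeps it parking, while raising `f i` to `c > f i`
removes `i` from exactly the counts `#{j | f j ≤ a}` with `f i ≤ a < c`. Hence if the count at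
`f i` has slack, the first increment already parks; if it is tight, every value in `(f i, n)`
fails at `a = f i`, and the first success is the wrap-around to `0`.
-/

open Finset

open scoped Classical

open Fin.NatCast

/-- Parking functions: for each i, at least i+1 inputs have value ≤ i (0-indexed version of
\#f⁻¹([i]) ≥ i for all i ∈ [n]). -/
def Park (n : ℕ) : Set (Fin n → Fin n) :=
  {f | ∀ i : Fin n, i.val + 1 ≤ (Finset.univ.filter fun j => f j ≤ i).card}

section Whirl

variable {n k : ℕ} [NeZero k] {F : Set (Fin n → Fin k)} {i : Fin n} {f : Fin n → Fin k}

theorem whirl_eq_update_of_minimal {t : ℕ} (ht : 0 < t)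
    (hmem : Function.update f i (f i + (t : Fin k)) ∈ F)
    (hmin : ∀ m : ℕ, 0 < m → m < t → Function.update f i (f i + (m : Fin k)) ∉ F) :
    whirl F i f = Function.update f i (f i + (t : Fin k)) := by
  have hex : ∃ t : ℕ, 0 < t ∧ Function.update f i (f i + (t : Fin k)) ∈ F :=
    ⟨t, ht, hmem⟩
  have hfind : Nat.find hex = t :=
    (Nat.find_eq_iff hex).2 ⟨⟨ht, hmem⟩, fun m hm ⟨hm0, hmF⟩ => hmin m hm0 hm hmF⟩
  rw [whirl, dif_pos hex, hfind]

theorem whirl_apply_self_of_minimal {t : ℕ} (ht : 0 < t)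
    (hmem : Function.update f i (f i + (t : Fin k)) ∈ F)
    (hmin : ∀ m : ℕ, 0 < m → m < t → Function.update f i (f i + (m : Fin k)) ∉ F) :
    whirl F i f i = f i + (t : Fin k) := by
  rw [whirl_eq_update_of_minimal ht hmem hmin, Function.update_self]

end Whirl

section Update

variable {ι α : Type*} [Fintype ι] [DecidableEq ι] {f : ι → α} {i : ι} {c : α}
  {p : α → Prop} [DecidablePred p]

theorem card_filter_update_of_iff (h : p c ↔ p (f i)) :
    #{j | p (Function.update f i c j)} = #{j | p (f j)} := by
  congr 1
  ext j
  rcases eq_or_ne j i with rfl | hj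
  · simp [h]
  · simp [Function.update_of_ne hj]

theorem card_filter_update_add_one (hc : ¬p c) (hi : p (f i)) :
    #{j | p (Function.update f i c j)} + 1 = #{j | p (f j)} := by
  have herase : ({j | p (Function.update f i c j)} : Finset ι) =
      ({j | p (f j)} : Finset ι).erase i := by
    ext j
    rcases eq_or_ne j i with rfl | hj
    · simp [hc]
    · simp [hj]
  rw [herase, card_erase_add_one (by simpa using hi)]

theorem card_filter_le_card_filter_update (h : p (f i) → p c) :
    #{j | p (f j)} ≤ #{j | p (Function.update f i c j)} := by
  refine card_le_card fun j hj => ?_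
  simp only [mem_filter, mem_univ, true_and] at hj ⊢
  rcases eq_or_ne j i with rfl | hj'
  · simpa using h hj
  · rwa [Function.update_of_ne hj']

end Update

namespace Park

variable {n : ℕ} {f : Fin n → Fin n} {i c : Fin n}

theorem update_mem_of_le (hf : f ∈ Park n) (hc : c ≤ f i) : Function.update f i c ∈ Park n :=
  fun a => (hf a).trans (card_filter_le_card_filter_update (p := (· ≤ a)) hc.trans)

theorem update_mem_iff_of_lt (hf : f ∈ Park n) (hc : f i < c) :
    Function.update f i c ∈ Park n ↔
      ∀ a, f i ≤ a → a < c → a.val + 1 < #{j | f j ≤ a} := by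
  constructor
  · intro hu a hia hac
    have := card_filter_update_add_one (p := (· ≤ a)) (not_le.2 hac) hia
    have := hu a
    omega
  · intro h a
    by_cases hia : f i ≤ a
    · by_cases hac : a < c
      · have := card_filter_update_add_one (p := (· ≤ a)) (not_le.2 hac) hia
        have := h a hia hac
        omega
      · rw [card_filter_update_of_iff (p := (· ≤ a)) (iff_of_true (not_lt.1 hac) hia)]
        exact hf a
    · have hca : ¬c ≤ a := fun hca => hia (hc.le.trans hca)
      rw [card_filter_update_of_iff (p := (· ≤ a)) (iff_of_false hca hia)]
      exact hf a

end Park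

theorem Fin.val_add_natCast_of_lt {n : ℕ} [NeZero n] (a : Fin n) {m : ℕ} (h : a.val + m < n) :
    (a + (m : Fin n)).val = a.val + m := by
  rw [Fin.val_add, Fin.val_natCast, Nat.add_mod_mod, Nat.mod_eq_of_lt h]

theorem Fin.add_natCast_sub_val {n : ℕ} [NeZero n] (a : Fin n) :
    a + ((n - a.val : ℕ) : Fin n) = 0 := by
  ext
  rw [Fin.val_add, Fin.val_natCast, Nat.add_mod_mod, show a.val + (n - a.val) = n by omega,
    Nat.mod_self, Fin.val_zero]

theorem stmt9 {n : ℕ} [NeZero n] (f : Fin n → Fin n) (hf : f ∈ Park n) (i : Fin n) :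
    ((f i).val + 1 < (Finset.univ.filter fun j => f j ≤ f i).card →
        whirl (Park n) i f i = f i + 1) ∧
    ((Finset.univ.filter fun j => f j ≤ f i).card = (f i).val + 1 →
        whirl (Park n) i f i = 0) := by
  refine ⟨fun hlt => ?_, fun heq => ?_⟩
  · have hsucc : (f i).val + 1 < n := hlt.trans_le (card_filter_le _ _ |>.trans (by simp))
    have hval : (f i + ((1 : ℕ) : Fin n)).val = (f i).val + 1 := Fin.val_add_natCast_of_lt _ hsucc
    have hmem : Function.update f i (f i + ((1 : ℕ) : Fin n)) ∈ Park n := by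
      refine (Park.update_mem_iff_of_lt hf (Fin.lt_def.2 (by omega))).2 fun a hia hac => ?_
      rw [Fin.le_def] at hia
      rw [Fin.lt_def, hval] at hac
      obtain rfl : a = f i := Fin.ext (by omega)
      exact hlt
    rw [whirl_apply_self_of_minimal one_pos hmem (fun m hm hm1 => absurd hm1 (by omega)),
      Nat.cast_one]
  · have hmin : ∀ m : ℕ, 0 < m → m < n - (f i).val →
        Function.update f i (f i + (m : Fin n)) ∉ Park n := by
      intro m hm hmn hu
      have hval := Fin.val_add_natCast_of_lt (f i) (m := m) (by omega)
      have := (Park.update_mem_iff_of_lt hf (Fin.lt_def.2 (by omega))).1 hu (f i) le_rfl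
        (Fin.lt_def.2 (by omega))
      omega
    have hmem := Park.update_mem_of_le (i := i) hf (Fin.zero_le (f i))
    rw [← Fin.add_natCast_sub_val (f i)] at hmem ⊢
    exact whirl_apply_self_of_minimal (by omega) hmem hmin
end
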